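/- arXiv:1206.3546 — 2 statements merged into one kernel-verified Lean document; each statement's English description precedes it below -/
import Mathlib

section
/- Let K be a UFD of characteristic p > 0, let A = K[x_1,…,x_n] be the polynomial algebra, B = K[x_1^p,…,x_n^p], let f_1,…,f_m ∈ A, let Q be a prime ideal of A, and fix i ∈ {1,…,m}; set R_i = B[f_1,…,f_{i-1},f_{i+1},…,f_m]. Suppose there exist s_1,…,s_m ∈ A with s_i ∉ Q such that s_1·d(f_1) + … + s_m·d(f_m) ∈ Q for every K-derivation d of A. Then the image of f_i in A/Q is p-dependent over the image of R_i in A/Q, i.e., the coset f_i + Q lies in the fraction field (inside Frac(A/Q)) of the canonical image of R_i in A/Q. -/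
open MvPolynomial

/-- The monomial `f₁^{α₁} ⋯ f_m^{α_m}` for a multi-index `α ∈ Ω_m` (all exponents `< p`). -/
def pMonomial {S : Type*} [CommRing S] {m p : ℕ} (f : Fin m → S) (α : Fin m → Fin p) : S :=
  ∏ i, f i ^ (α i : ℕ)

/-- `f₁, …, f_m` are `p`-independent over the subring `B`. -/
def pIndependent {S : Type*} [CommRing S] (B : Subring S) {m : ℕ} (p : ℕ) (f : Fin m → S) : Prop :=
  ∀ b : (Fin m → Fin p) → S, (∀ α, b α ∈ B) →
    ∑ α : Fin m → Fin p, b α * pMonomial f α = 0 → ∀ α, b α = 0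

/-- `f₁, …, f_m` form a `p`-basis of `R` over `B`. -/
def IsPBasis {S : Type*} [CommRing S] (B : Subring S) (R : Set S) {m : ℕ} (p : ℕ)
    (f : Fin m → S) : Prop :=
  (↑B ⊆ R) ∧ (∀ α : Fin m → Fin p, pMonomial f α ∈ R) ∧ pIndependent B p f ∧
    ∀ r ∈ R, ∃ b : (Fin m → Fin p) → S, (∀ α, b α ∈ B) ∧
      r = ∑ α : Fin m → Fin p, b α * pMonomial f α

/-- The jacobian determinant of `f₁,…,f_m` w.r.t. the variables `x_{j₁},…,x_{j_m}`. -/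
noncomputable def jacMinor {K : Type*} [CommRing K] {n m : ℕ} (f : Fin m → MvPolynomial (Fin n) K)
    (j : Fin m → Fin n) : MvPolynomial (Fin n) K :=
  (Matrix.of fun i l => pderiv (j l) (f i)).det

/-- The subring `B = K[x₁^p, …, x_n^p]` of `K[x₁,…,x_n]`. -/
noncomputable def pPowers (K : Type*) [CommRing K] (n p : ℕ) : Subring (MvPolynomial (Fin n) K) :=
  (Algebra.adjoin K (Set.range fun i : Fin n => (X i : MvPolynomial (Fin n) K) ^ p)).toSubring

/-- `R_i = B[f₁,…,f̂ᵢ,…,f_m]`. -/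
noncomputable def Ri (K : Type*) [CommRing K] {n m : ℕ} (p : ℕ) (f : Fin m → MvPolynomial (Fin n) K)
    (i : Fin m) : Subring (MvPolynomial (Fin n) K) :=
  Subring.closure (↑(pPowers K n p) ∪ (f '' {j | j ≠ i}))

/-- `R_{ij} = B[f₁,…,f̂ᵢ,…,f̂ⱼ,…,f_m]`. -/
noncomputable def Rij (K : Type*) [CommRing K] {n m : ℕ} (p : ℕ) (f : Fin m → MvPolynomial (Fin n) K)
    (i j : Fin m) : Subring (MvPolynomial (Fin n) K) :=
  Subring.closure (↑(pPowers K n p) ∪ (f '' {l | l ≠ i ∧ l ≠ j}))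

/-- An element is `B`-free if it has no noninvertible factor from `B`. -/
def BFree {S : Type*} [CommRing S] (B : Subring S) (a : S) : Prop :=
  ∀ b ∈ B, b ∣ a → IsUnit b

/-- `C_B(f₁,…,f_m) = B₀(f₁,…,f_m) ∩ A`: those elements of `A` lying in the field of
fractions of `B[f₁,…,f_m]`. -/
def CB {S : Type*} [CommRing S] (B : Subring S) {m : ℕ} (f : Fin m → S) : Set S :=
  {a | ∃ s t : S, s ∈ Subring.closure (↑B ∪ Set.range f) ∧
      t ∈ Subring.closure (↑B ∪ Set.range f) ∧ s ≠ 0 ∧ a * s = t}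

/-- A `B`-derivation of `A`: additive, Leibniz rule, vanishing on `B`. -/
def IsBDerivation {S : Type*} [CommRing S] (B : Subring S) (d : S → S) : Prop :=
  (∀ x y, d (x + y) = d x + d y) ∧ (∀ x y, d (x * y) = x * d y + y * d x) ∧ ∀ b ∈ B, d b = 0

/-!
Write `φ : A → L = Frac(A/Q)` and let `E ⊆ L` be the field of fractions of `φ(Rᵢ)`. As `Rᵢ`
contains every `p`-th power of `A`, `Lᵖ ⊆ E`. If `u = φ(fᵢ)` were not in `E`, a subfield
`M ⊇ E` maximal among those avoiding `u` satisfies `L = M(u)` with `minpoly M u = Xᵖ - uᵖ`;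
its derivative vanishes, so `d/dX` descends to an `M`-derivation `D` of `L` with `D u = 1`.
Clearing the denominators of the `D(φ xⱼ)` gives a `K`-derivation `d` of `A` with
`φ ∘ d = c · D ∘ φ`, `c ≠ 0`. Since `D` kills `φ(fₗ)` for `l ≠ i`, condition `(∗)` for `d`
becomes `φ(sᵢ) · c = 0`, contradicting `sᵢ ∉ Q`.
-/

section InseparableDerivation

open Polynomial IntermediateField

theorem Derivation.exists_apply_eq_one_of_derivative_minpoly_eq_zero {F L : Type*} [Field F]
    [CommRing L] [Algebra F L] {u : L} (htop : Algebra.adjoin F {u} = ⊤)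
    (hder : derivative (minpoly F u) = 0) : ∃ D : Derivation F L L, D u = 1 := by
  have hsurj : Function.Surjective (Polynomial.aeval u : F[X] →ₐ[F] L) := by
    rw [← AlgHom.range_eq_top, ← Algebra.adjoin_singleton_eq_range_aeval, htop]
  have hker : ∀ q : F[X], Polynomial.aeval u q = 0 →
      Polynomial.aeval u (derivative' q) = 0 := by
    intro q hq
    obtain ⟨r, rfl⟩ := minpoly.dvd F u hq
    simp [hder]
  refine ⟨Derivation.liftOfSurjective hsurj hker, ?_⟩
  simpa using Derivation.liftOfSurjective_apply hsurj hker Polynomial.X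

theorem Polynomial.derivative_X_pow_sub_C_eq_zero {R : Type*} [CommRing R] (p : ℕ) [CharP R p]
    (c : R) : derivative (Polynomial.X ^ p - Polynomial.C c : R[X]) = 0 := by
  simp [derivative_X_pow]

theorem minpoly.eq_X_pow_sub_C_of_notMem {M L : Type*} [Field M] [Field L] [Algebra M L]
    {p : ℕ} [hp : Fact p.Prime] [CharP L p] {x : L} {c : M} (hc : x ^ p = algebraMap M L c)
    (hx : x ∉ Set.range (algebraMap M L)) : minpoly M x = Polynomial.X ^ p - Polynomial.C c := by
  refine (minpoly.eq_of_irreducible_of_monic ?_ (by simp [hc])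
    (monic_X_pow_sub_C c hp.out.ne_zero)).symm
  refine X_pow_sub_C_irreducible_of_prime hp.out fun b hb => hx ⟨b, ?_⟩
  have : (algebraMap M L b - x) ^ p = 0 := by rw [sub_pow_char, ← map_pow, hb, hc, sub_self]
  exact sub_eq_zero.mp (pow_eq_zero_iff hp.out.ne_zero |>.mp this)

theorem IntermediateField.exists_maximal_notMem {F L : Type*} [Field F] [Field L] [Algebra F L]
    {u : L} (hu : u ∉ (⊥ : IntermediateField F L)) :
    ∃ M : IntermediateField F L, Maximal (fun N => u ∉ N) M := by
  have hchain : ∀ c ⊆ {N : IntermediateField F L | u ∉ N}, IsChain (· ≤ ·) c →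
      ∀ N ∈ c, ∃ ub ∈ {N : IntermediateField F L | u ∉ N}, ∀ N' ∈ c, N' ≤ ub := by
    intro c hc hchain N hN
    refine ⟨sSup c, fun hmem => ?_, fun _ => le_sSup⟩
    rw [← adjoin_simple_le_iff] at hmem
    obtain ⟨N', hN', hle⟩ :=
      (CompleteLattice.isCompactElement_iff_le_of_directed_sSup_le _ _).mp
        (adjoin_simple_isCompactElement u) c ⟨N, hN⟩ hchain.directedOn hmem
    exact hc hN' (adjoin_simple_le_iff.mp hle)
  obtain ⟨M, -, hM⟩ := zorn_le_nonempty₀ _ hchain ⊥ hu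
  exact ⟨M, hM⟩

theorem IntermediateField.finrank_adjoin_simple_of_pow_eq {M L : Type*} [Field M] [Field L]
    [Algebra M L] {p : ℕ} [hp : Fact p.Prime] [CharP L p] {x : L} {c : M}
    (hc : x ^ p = algebraMap M L c) (hx : x ∉ Set.range (algebraMap M L)) :
    Module.finrank M M⟮x⟯ = p := by
  have hint : IsIntegral M x := IsIntegral.of_pow hp.out.pos (hc ▸ isIntegral_algebraMap)
  rw [adjoin.finrank hint, minpoly.eq_X_pow_sub_C_of_notMem hc hx, natDegree_X_pow_sub_C]

theorem IntermediateField.adjoin_simple_eq_top_of_maximal {F L : Type*} [Field F] [Field L]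
    [Algebra F L] {p : ℕ} [hp : Fact p.Prime] [CharP L p] {M : IntermediateField F L}
    (hpow : ∀ x : L, x ^ p ∈ M) {u : L} (hM : Maximal (fun N => u ∉ N) M) : M⟮u⟯ = ⊤ := by
  have hfinrank : ∀ x ∉ M, Module.finrank M M⟮x⟯ = p := fun x hx =>
    finrank_adjoin_simple_of_pow_eq (c := ⟨x ^ p, hpow x⟩) rfl fun ⟨y, hy⟩ => hx (hy ▸ y.2)
  rw [eq_top_iff]
  intro x _
  by_cases hx : x ∈ M
  · exact algebraMap_mem M⟮u⟯ ⟨x, hx⟩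
  -- maximality of `M` forces `u ∈ M⟮x⟯`, and both fields have degree `p` over `M`
  have hux : u ∈ M⟮x⟯ := by
    by_contra hux
    have hle : M ≤ M⟮x⟯.restrictScalars F := fun y hy => algebraMap_mem M⟮x⟯ ⟨y, hy⟩
    exact hx (hM.2 hux hle (mem_adjoin_simple_self M x))
  have : FiniteDimensional M M⟮x⟯ :=
    Module.finite_of_finrank_pos (hfinrank x hx ▸ hp.out.pos)
  have heq : M⟮u⟯ = M⟮x⟯ := eq_of_le_of_finrank_eq (adjoin_simple_le_iff.mpr hux)
    (by rw [hfinrank u hM.1, hfinrank x hx])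
  exact heq ▸ mem_adjoin_simple_self M x

theorem IntermediateField.exists_derivation_apply_eq_one {F L : Type*} [Field F] [Field L]
    [Algebra F L] {p : ℕ} [hp : Fact p.Prime] [CharP L p]
    (hpow : ∀ x : L, x ^ p ∈ Set.range (algebraMap F L)) {u : L}
    (hu : u ∉ Set.range (algebraMap F L)) : ∃ D : Derivation F L L, D u = 1 := by
  obtain ⟨M, hM⟩ := exists_maximal_notMem (F := F) (mem_bot.not.mpr hu)
  have hMpow : ∀ x : L, x ^ p ∈ M := fun x => by
    obtain ⟨y, hy⟩ := hpow x
    exact hy ▸ M.algebraMap_mem y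
  have : CharP M p := (algebraMap M L).charP (algebraMap M L).injective p
  have hint : IsIntegral M u :=
    IsIntegral.of_pow hp.out.pos (isIntegral_algebraMap (x := (⟨u ^ p, hMpow u⟩ : M)))
  obtain ⟨D, hD⟩ := Derivation.exists_apply_eq_one_of_derivative_minpoly_eq_zero
    (by rw [← adjoin_simple_toSubalgebra_of_isAlgebraic hint.isAlgebraic,
      adjoin_simple_eq_top_of_maximal hMpow hM, top_toSubalgebra])
    (by rw [minpoly.eq_X_pow_sub_C_of_notMem (c := (⟨u ^ p, hMpow u⟩ : M)) rfl
          fun ⟨y, hy⟩ => hM.1 (hy ▸ y.2), derivative_X_pow_sub_C_eq_zero])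
  exact ⟨D.restrictScalars F, hD⟩

end InseparableDerivation

theorem pow_mem_pPowers {K : Type*} [CommRing K] {n p : ℕ} [Fact p.Prime] [CharP K p]
    (z : MvPolynomial (Fin n) K) : z ^ p ∈ pPowers K n p := by
  induction z using MvPolynomial.induction_on with
  | C a => exact map_pow (C : K →+* _) a p ▸ Subalgebra.algebraMap_mem _ (a ^ p)
  | add g h hg hh => exact (add_pow_char g h p).symm ▸ add_mem hg hh
  | mul_X g j hg => exact (mul_pow g (X j) p).symm ▸ mul_mem hg (Algebra.subset_adjoin ⟨j, rfl⟩)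

theorem Subfield.exists_mul_eq_of_mem_closure {L : Type*} [Field L] {T : Subring L} {x : L}
    (hx : x ∈ Subfield.closure (T : Set L)) : ∃ a ∈ T, ∃ b ∈ T, b ≠ 0 ∧ b * x = a := by
  obtain ⟨a, ha, b, hb, rfl⟩ := Subfield.mem_closure_iff.mp hx
  rw [Subring.closure_eq] at ha hb
  by_cases hb0 : b = 0
  · exact ⟨0, T.zero_mem, 1, T.one_mem, one_ne_zero, by simp [hb0]⟩
  · exact ⟨a, ha, b, hb, hb0, mul_div_cancel₀ a hb0⟩

section FractionRing

variable {A R L : Type*} [CommRing A] [CommRing R] [Field L] [Algebra R L] [IsFractionRing R L]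
  {π : A →+* R}

theorem IsFractionRing.pow_mem_closure_map (hπ : Function.Surjective π) {S : Subring A} {p : ℕ}
    (hS : ∀ z, z ^ p ∈ S) (x : L) :
    x ^ p ∈ Subfield.closure (S.map ((algebraMap R L).comp π) : Set L) := by
  obtain ⟨a, b, -, rfl⟩ := IsFractionRing.div_surjective (A := R) x
  obtain ⟨a, rfl⟩ := hπ a
  obtain ⟨b, rfl⟩ := hπ b
  rw [div_pow]
  exact div_mem (Subfield.subset_closure ⟨a ^ p, hS a, by simp⟩)
    (Subfield.subset_closure ⟨b ^ p, hS b, by simp⟩)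

theorem IsFractionRing.exists_ne_zero_mul_eq_map {ι : Type*} [Finite ι]
    (hπ : Function.Surjective π) (y : ι → L) :
    ∃ c : L, c ≠ 0 ∧ ∃ a : ι → A, ∀ j, algebraMap R L (π (a j)) = c * y j := by
  obtain ⟨t, ht⟩ := IsLocalization.exist_integer_multiples_of_finite (nonZeroDivisors R) y
  choose r hr using ht
  choose a ha using fun j => hπ (r j)
  have := (algebraMap R L).domain_nontrivial
  refine ⟨algebraMap R L t, IsFractionRing.to_map_ne_zero_of_mem_nonZeroDivisors t.2, a,
    fun j => ?_⟩
  rw [ha, hr, Algebra.smul_def]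

end FractionRing

theorem MvPolynomial.map_derivation_eq_mul {σ K R L : Type*} [CommRing K] [CommRing R]
    [CommRing L] [Algebra R L] (φ : MvPolynomial σ K →+* L)
    (d : Derivation K (MvPolynomial σ K) (MvPolynomial σ K)) (D : Derivation R L L) (c : L)
    (hC : ∀ k, D (φ (C k)) = 0) (hX : ∀ j, φ (d (X j)) = c * D (φ (X j)))
    (g : MvPolynomial σ K) : φ (d g) = c * D (φ g) := by
  induction g using MvPolynomial.induction_on with
  | C k => rw [derivation_C, map_zero, hC, mul_zero]
  | add g h hg hh => rw [map_add, map_add, map_add, D.map_add, hg, hh, mul_add]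
  | mul_X g j hg =>
    rw [d.leibniz, map_mul, map_add, smul_eq_mul, smul_eq_mul, map_mul, map_mul, D.leibniz,
      smul_eq_mul, smul_eq_mul, hg, hX]
    ring

theorem MvPolynomial.exists_derivation_map_eq_mul {σ K R L F : Type*} [Finite σ] [CommRing K]
    [CommRing R] [Field L] [Algebra R L] [IsFractionRing R L] [CommRing F] [Algebra F L]
    {π : MvPolynomial σ K →+* R} (hπ : Function.Surjective π) (D : Derivation F L L)
    (hC : ∀ k, D (algebraMap R L (π (C k))) = 0) :
    ∃ c : L, c ≠ 0 ∧ ∃ d : Derivation K (MvPolynomial σ K) (MvPolynomial σ K),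
      ∀ g, algebraMap R L (π (d g)) = c * D (algebraMap R L (π g)) := by
  obtain ⟨c, hc0, a, ha⟩ :=
    IsFractionRing.exists_ne_zero_mul_eq_map (L := L) hπ fun j => D (algebraMap R L (π (X j)))
  exact ⟨c, hc0, mkDerivation K a, map_derivation_eq_mul ((algebraMap R L).comp π) _ D c hC
    fun j => by simpa [mkDerivation_X] using ha j⟩

theorem pDependent_of_star_general
    {K : Type*} [CommRing K] [IsDomain K]
    (p : ℕ) (hp : 0 < p) [CharP K p] {n m : ℕ}
    (f : Fin m → MvPolynomial (Fin n) K)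
    (Q : Ideal (MvPolynomial (Fin n) K)) (hQ : Q.IsPrime) (i : Fin m)
    (hstar : ∃ s : Fin m → MvPolynomial (Fin n) K, s i ∉ Q ∧
      ∀ d : Derivation K (MvPolynomial (Fin n) K) (MvPolynomial (Fin n) K),
        (∑ l, s l * d (f l)) ∈ Q) :
    ∃ b c : MvPolynomial (Fin n) K, b ∈ Ri K p f i ∧ c ∈ Ri K p f i ∧
      Ideal.Quotient.mk Q b ≠ 0 ∧
      Ideal.Quotient.mk Q b * Ideal.Quotient.mk Q (f i) = Ideal.Quotient.mk Q c := by
  obtain ⟨s, hsi, hs⟩ := hstar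
  have : Fact p.Prime := ⟨(CharP.char_is_prime_or_zero K p).resolve_right hp.ne'⟩
  let L := FractionRing (MvPolynomial (Fin n) K ⧸ Q)
  have : CharP L p := CharP.of_ringHom_of_ne_zero (algebraMap K L) p hp.ne'
  let φ := (algebraMap _ L).comp (Ideal.Quotient.mk Q)
  have hφ : ∀ a, φ a = 0 ↔ a ∈ Q := fun a => by simp [φ, Ideal.Quotient.eq_zero_iff_mem]
  let E := Subfield.closure ((Ri K p f i).map φ : Set L)
  have hRi : ∀ a ∈ Ri K p f i, φ a ∈ E := fun a ha => Subfield.subset_closure ⟨a, ha, rfl⟩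
  suffices hfi : φ (f i) ∈ E by
    obtain ⟨_, ⟨c, hc, rfl⟩, _, ⟨b, hb, rfl⟩, hb0, hbc⟩ :=
      Subfield.exists_mul_eq_of_mem_closure hfi
    refine ⟨b, c, hb, hc, fun h => hb0 (by simp [φ, h]), ?_⟩
    exact IsFractionRing.injective _ L (by simpa [φ] using hbc)
  by_contra hfi
  have hpow : ∀ x : L, x ^ p ∈ E := IsFractionRing.pow_mem_closure_map
    Ideal.Quotient.mk_surjective fun z => Subring.subset_closure (Or.inl (pow_mem_pPowers z))
  obtain ⟨D, hD⟩ := IntermediateField.exists_derivation_apply_eq_one (F := E)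
    (fun x => ⟨⟨_, hpow x⟩, rfl⟩) (u := φ (f i)) fun ⟨y, hy⟩ => hfi (hy ▸ y.2)
  have hDE : ∀ a ∈ Ri K p f i, D (φ a) = 0 := fun a ha => D.map_algebraMap ⟨_, hRi a ha⟩
  obtain ⟨c, hc0, d, hd⟩ : ∃ c : L, c ≠ 0 ∧ ∃ d : Derivation K _ _, ∀ g, φ (d g) = c * D (φ g) :=
    MvPolynomial.exists_derivation_map_eq_mul
    (Ideal.Quotient.mk_surjective (I := Q)) D fun k =>
      hDE (C k) (Subring.subset_closure (Or.inl (Subalgebra.algebraMap_mem _ k)))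
  have hsum : φ (∑ l, s l * d (f l)) = φ (s i) * c := by
    rw [map_sum, Finset.sum_eq_single i, map_mul, hd, hD, mul_one]
    · intro l _ hl
      rw [map_mul, hd, hDE _ (Subring.subset_closure (Or.inr ⟨l, hl, rfl⟩)), mul_zero, mul_zero]
    · simp
  exact mul_ne_zero (mt (hφ _).mp hsi) hc0 (hsum ▸ (hφ _).mpr (hs d))

/-- **Proposition 1 b).** If condition `(∗)` holds for the index `i`, then the coset of `fᵢ`
in `A/Q` is `p`-dependent over the image of `Rᵢ = B[f₁,…,f̂ᵢ,…,f_m]` in `A/Q`, i.e. it lies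
in the field of fractions of that image inside `Frac(A/Q)`. -/
theorem pDependent_of_star
    {K : Type*} [CommRing K] [IsDomain K] [UniqueFactorizationMonoid K]
    (p : ℕ) (hp : 0 < p) [CharP K p] {n m : ℕ}
    (f : Fin m → MvPolynomial (Fin n) K)
    (Q : Ideal (MvPolynomial (Fin n) K)) (hQ : Q.IsPrime) (i : Fin m)
    (hstar : ∃ s : Fin m → MvPolynomial (Fin n) K, s i ∉ Q ∧
      ∀ d : Derivation K (MvPolynomial (Fin n) K) (MvPolynomial (Fin n) K),
        (∑ l, s l * d (f l)) ∈ Q) :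
    ∃ b c : MvPolynomial (Fin n) K, b ∈ Ri K p f i ∧ c ∈ Ri K p f i ∧
      Ideal.Quotient.mk Q b ≠ 0 ∧
      Ideal.Quotient.mk Q b * Ideal.Quotient.mk Q (f i) = Ideal.Quotient.mk Q c :=
  pDependent_of_star_general p hp f Q hQ i hstar
end

section
/- Let A be a domain of characteristic p > 0 and B a subring of A containing A^p, and assume B_0 ∩ A = B, where B_0 is the field of fractions of B inside Frac(A). Let f_1,…,f_m ∈ A be p-independent over B. Then C_B(f_1,…,f_m) = B[f_1,…,f_m] if and only if for every nonzero b ∈ B and every family (a_α)_{α ∈ Ω_m} of elements of B, if b divides Σ_{α ∈ Ω_m} a_α·f^α in A, then b divides a_α in A for every α ∈ Ω_m. -/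
lemma pMonomial_mul {A : Type*} [CommRing A] {m p : ℕ} (f : Fin m → A) (B : Subring A)
    (hB : ∀ i, f i ^ p ∈ B) (α β : Fin m → Fin p) :
    ∃ e ∈ B, pMonomial f α * pMonomial f β = e * pMonomial f (α + β) := by
  refine ⟨∏ i, (f i ^ p) ^ (((α i : ℕ) + (β i : ℕ)) / p),
    prod_mem fun i _ => pow_mem (hB i) _, ?_⟩
  unfold pMonomial
  rw [← Finset.prod_mul_distrib, ← Finset.prod_mul_distrib]
  refine Finset.prod_congr rfl fun i _ => ?_
  rw [← pow_add, ← pow_mul, ← pow_add]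
  congr 1
  rw [Pi.add_apply, Fin.val_add]
  exact (Nat.div_add_mod _ p).symm

lemma single_rep {A : Type*} [CommRing A] {m p : ℕ} (f : Fin m → A) (c : A)
    (γ : Fin m → Fin p) :
    ∑ α : Fin m → Fin p, (if α = γ then c else 0) * pMonomial f α = c * pMonomial f γ := by
  rw [Finset.sum_eq_single γ]
  · simp
  · intro b _ hb; simp [hb]
  · intro h; exact absurd (Finset.mem_univ γ) h

lemma closure_rep {A : Type*} [CommRing A] {m p : ℕ} (hp : 1 < p) (B : Subring A)
    (hB : ∀ a : A, a ^ p ∈ B) (f : Fin m → A) {x : A}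
    (hx : x ∈ Subring.closure ((B : Set A) ∪ Set.range f)) :
    ∃ b : (Fin m → Fin p) → A, (∀ α, b α ∈ B) ∧
      x = ∑ α : Fin m → Fin p, b α * pMonomial f α := by
  haveI : NeZero p := ⟨by omega⟩
  induction hx using Subring.closure_induction with
  | mem x hx =>
    rcases hx with hx | ⟨i, rfl⟩
    · refine ⟨fun α => if α = 0 then x else 0,
        fun α => by have hx' : x ∈ B := hx; by_cases h : α = 0 <;> simp [h, hx', B.zero_mem], ?_⟩
      rw [single_rep]
      simp [pMonomial]
    · refine ⟨fun α => if α = (fun j => if j = i then (1 : Fin p) else 0) then 1 else 0,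
        fun α => by by_cases h : α = (fun j => if j = i then (1 : Fin p) else 0) <;> simp [h, B.one_mem, B.zero_mem], ?_⟩
      rw [single_rep, one_mul]
      unfold pMonomial
      rw [Finset.prod_eq_single i]
      · simp [Fin.val_one', Nat.mod_eq_of_lt hp]
      · intro j _ hj; simp [hj]
      · intro h; exact absurd (Finset.mem_univ i) h
  | zero => exact ⟨0, fun α => B.zero_mem, by simp⟩
  | one =>
    refine ⟨fun α => if α = 0 then 1 else 0, fun α => by by_cases h : α = 0 <;> simp [h, B.one_mem, B.zero_mem], ?_⟩
    rw [single_rep]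
    simp [pMonomial]
  | add x y hx hy ihx ihy =>
    obtain ⟨b, hb, rfl⟩ := ihx
    obtain ⟨c, hc, rfl⟩ := ihy
    exact ⟨b + c, fun α => B.add_mem (hb α) (hc α), by
      rw [← Finset.sum_add_distrib]; simp [add_mul]⟩
  | neg x hx ihx =>
    obtain ⟨b, hb, rfl⟩ := ihx
    exact ⟨-b, fun α => B.neg_mem (hb α), by simp [neg_mul, Finset.sum_neg_distrib]⟩
  | mul x y hx hy ihx ihy =>
    obtain ⟨b, hb, rfl⟩ := ihx
    obtain ⟨c, hc, rfl⟩ := ihy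
    choose e he1 he2 using fun α β => pMonomial_mul f B (fun i => hB (f i)) α β
    refine ⟨fun γ => ∑ α : Fin m → Fin p, b α * c (γ - α) * e α (γ - α),
      fun γ => Subring.sum_mem _ fun α _ =>
        B.mul_mem (B.mul_mem (hb α) (hc _)) (he1 _ _), ?_⟩
    rw [Finset.sum_mul_sum]
    have key : ∀ α : Fin m → Fin p,
        ∑ β : Fin m → Fin p, (b α * pMonomial f α) * (c β * pMonomial f β)
        = ∑ γ : Fin m → Fin p, b α * c (γ - α) * e α (γ - α) * pMonomial f γ := by
      intro α
      refine Fintype.sum_equiv (Equiv.addLeft α) _ _ fun β => ?_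
      simp only [Equiv.coe_addLeft, add_sub_cancel_left]
      rw [mul_mul_mul_comm, he2 α β]
      ring
    rw [Finset.sum_congr rfl fun α _ => key α, Finset.sum_comm]
    refine Finset.sum_congr rfl fun γ _ => ?_
    rw [Finset.sum_mul]

lemma rep_mem_closure {A : Type*} [CommRing A] {m p : ℕ} (B : Subring A) (f : Fin m → A)
    (b : (Fin m → Fin p) → A) (hb : ∀ α, b α ∈ B) :
    ∑ α : Fin m → Fin p, b α * pMonomial f α ∈ Subring.closure ((B : Set A) ∪ Set.range f) := by
  unfold pMonomial
  exact Subring.sum_mem _ fun α _ => Subring.mul_mem _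
    (Subring.subset_closure (Set.mem_union_left _ (hb α)))
    (prod_mem fun i _ => pow_mem (Subring.subset_closure (Set.mem_union_right _ (Set.mem_range_self i))) _)

/-- **Lemma 2.** Assume `B₀ ∩ A = B` and `f₁,…,f_m` are `p`-independent over `B`. Then
`C_B(f₁,…,f_m) = B[f₁,…,f_m]` iff for every nonzero `b ∈ B` and coefficients `a_α ∈ B`,
`b ∣ Σ_α a_α f^α` implies `b ∣ a_α` for all `α`. -/
theorem CB_eq_iff_divisibility
    {A : Type*} [CommRing A] [IsDomain A] (p : ℕ) (hp : 0 < p) [CharP A p]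
    (B : Subring A) (hB : ∀ a : A, a ^ p ∈ B)
    (hB0 : {a : A | ∃ b c : A, b ∈ B ∧ c ∈ B ∧ b ≠ 0 ∧ a * b = c} = ↑B)
    {m : ℕ} (f : Fin m → A) (hf : pIndependent B p f) :
    CB B f = ↑(Subring.closure ((B : Set A) ∪ Set.range f)) ↔
      ∀ b : A, b ∈ B → b ≠ 0 → ∀ a : (Fin m → Fin p) → A, (∀ α, a α ∈ B) →
        b ∣ (∑ α : Fin m → Fin p, a α * pMonomial f α) → ∀ α, b ∣ a α := by
  have hp1 : 1 < p :=
    ((CharP.char_is_prime_or_zero A p).resolve_right (by omega)).one_lt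
  constructor
  · intro hCB b hbB hb0 a haB hdvd α
    obtain ⟨c, hc⟩ := hdvd
    have hcCB : c ∈ CB B f := by
      refine ⟨b, ∑ α : Fin m → Fin p, a α * pMonomial f α,
        Subring.subset_closure (Set.mem_union_left _ hbB),
        rep_mem_closure B f a haB, hb0, by rw [hc]; ring⟩
    rw [hCB] at hcCB
    obtain ⟨d, hd, rfl⟩ := closure_rep hp1 B hB f hcCB
    have hzero : ∑ β : Fin m → Fin p, (a β - b * d β) * pMonomial f β = 0 := by
      simp only [sub_mul, Finset.sum_sub_distrib]
      rw [hc, Finset.mul_sum, sub_eq_zero]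
      exact Finset.sum_congr rfl fun β _ => (mul_assoc _ _ _).symm
    have := hf (fun β => a β - b * d β)
      (fun β => B.sub_mem (haB β) (B.mul_mem hbB (hd β))) hzero α
    exact ⟨d α, sub_eq_zero.mp this⟩
  · intro hdiv
    apply Set.Subset.antisymm
    · rintro x ⟨s, t, hs, ht, hs0, hast⟩
      have hsp : s ^ p ∈ B := hB s
      have hsp0 : s ^ p ≠ 0 := pow_ne_zero p hs0
      have htR : t * s ^ (p - 1) ∈ Subring.closure ((B : Set A) ∪ Set.range f) :=
        Subring.mul_mem _ ht (pow_mem hs _)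
      obtain ⟨a, haB, ha⟩ := closure_rep hp1 B hB f htR
      have hx : x * s ^ p = ∑ α : Fin m → Fin p, a α * pMonomial f α := by
        rw [← ha]
        have : s ^ p = s * s ^ (p - 1) := by
          rw [← pow_succ']
          congr 1
          omega
        rw [this, ← mul_assoc, hast]
      have hdv : s ^ p ∣ ∑ α : Fin m → Fin p, a α * pMonomial f α :=
        ⟨x, by rw [← hx]; ring⟩
      have hall := hdiv (s ^ p) hsp hsp0 a haB hdv
      choose d hd using hall
      have hdB : ∀ α, d α ∈ B := by
        intro α
        have : d α ∈ {a : A | ∃ b c : A, b ∈ B ∧ c ∈ B ∧ b ≠ 0 ∧ a * b = c} :=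
          ⟨s ^ p, a α, hsp, haB α, hsp0, by rw [mul_comm]; exact (hd α).symm⟩
        rw [hB0] at this
        exact this
      have hxeq : x = ∑ α : Fin m → Fin p, d α * pMonomial f α := by
        apply mul_left_cancel₀ hsp0
        rw [mul_comm (s ^ p) x, hx, Finset.mul_sum]
        refine Finset.sum_congr rfl fun α _ => ?_
        rw [hd α]; ring
      rw [hxeq]
      exact rep_mem_closure B f d hdB
    · intro x hx
      exact ⟨1, x, Subring.one_mem _, hx, one_ne_zero, mul_one x⟩
end
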